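/- arXiv:1008.0286 — 4 statements merged into one kernel-verified Lean document; each statement's English description precedes it below -/
import Mathlib

section
/- For every set S, the topological space TO(S) of all total orderings on S, equipped with the topology 𝒰(S), is compact. -/
/-- A binary relation is a total ordering: antisymmetric, transitive, and total. -/
def IsTotalOrdering {S : Type*} (r : S → S → Prop) : Prop :=
  (∀ a b, r a b → r b a → a = b) ∧ (∀ a b c, r a b → r b c → r a c) ∧ (∀ a b, r a b ∨ r b a)

/-- The set `TO(S)` of all total orderings on `S`. -/
def TO (S : Type*) : Type _ := {r : S → S → Prop // IsTotalOrdering r}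

/-- The topology `𝒰(S)` on `TO(S)`, generated by the subbasis of all sets
`U_{(a,b)} = {≤ ∈ TO(S) : a ≤ b}`. -/
instance TOTopology (S : Type*) : TopologicalSpace (TO S) :=
  TopologicalSpace.generateFrom {U | ∃ a b : S, U = {r : TO S | r.1 a b}}

/-!
Encode a relation on `S` by its indicator in `S → S → Bool`, a compact space by Tychonoff.
Each axiom of a total ordering constrains only finitely many coordinates, so the total orderings
form a closed, hence compact, subset; and the subbasic sets `U_{(a,b)}` pull back to open sets,
so `TO(S)` is a continuous image of a compact space.
-/

open Set

namespace TO

variable {S : Type*}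

def boolTotalOrderings (S : Type*) : Set (S → S → Bool) :=
  {f | IsTotalOrdering fun a b => f a b}

theorem isClopen_setOf_apply_apply (a b : S) : IsClopen {f : S → S → Bool | f a b} :=
  (isClopen_discrete {true}).preimage ((continuous_apply b).comp (continuous_apply a))

theorem isClosed_boolTotalOrderings : IsClosed (boolTotalOrderings S) := by
  have h := isClopen_setOf_apply_apply (S := S)
  refine .and ?antisymm (.and ?trans ?total) <;> simp only [ofPred_forall] <;>
    refine isClosed_iInter fun a => isClosed_iInter fun b => ?_
  case antisymm => exact isClosed_imp (h a b).isOpen (isClosed_imp (h b a).isOpen isClosed_const)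
  case trans =>
    exact isClosed_iInter fun c =>
      isClosed_imp (h a b).isOpen (isClosed_imp (h b c).isOpen (h a c).isClosed)
  case total => exact (h a b).isClosed.union (h b a).isClosed

def ofBool (f : boolTotalOrderings S) : TO S :=
  ⟨fun a b => f.1 a b, f.2⟩

theorem continuous_ofBool : Continuous (ofBool (S := S)) :=
  continuous_generateFrom_iff.2 <| by
    rintro _ ⟨a, b, rfl⟩
    exact (isClopen_setOf_apply_apply a b).isOpen.preimage continuous_subtype_val

open scoped Classical in
theorem ofBool_surjective : Function.Surjective (ofBool (S := S)) := fun r =>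
  ⟨⟨fun a b => decide (r.1 a b), by simpa [boolTotalOrderings] using r.2⟩,
    Subtype.ext <| by funext a b; simp [ofBool]⟩

end TO

/-- For every set `S`, the space `TO(S)` of total orderings on `S`, with the topology `𝒰(S)`,
is compact. -/
theorem TO_compactSpace (S : Type*) : CompactSpace (TO S) :=
  have := isCompact_iff_compactSpace.1 (TO.isClosed_boolTotalOrderings (S := S)).isCompact
  TO.ofBool_surjective.compactSpace TO.continuous_ofBool
end

section
/- If a set S admits a filtration 𝐒 = (S_i)_{i∈ℕ} in which every S_i is finite, then d_𝐒 is a metric on TO(S), the topology induced on TO(S) by the metric d_𝐒 coincides with the topology 𝒰(S) (in particular this metric topology is independent of the choice of such a filtration), and 𝒰(S) is Hausdorff. -/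
/-- The function `d_𝐒` associated to a filtration `𝐒 = (F i)` of `S`:
`d_𝐒(≤,≤') = 2^{-r}` where `r = sup{ i : ≤ and ≤' agree on F i }`, and `d_𝐒(≤,≤') = 0`
when the supremum is infinite (i.e. when `≤ = ≤'`). -/
noncomputable def dS {S : Type*} (F : ℕ → Set S) (r r' : TO S) : ℝ :=
  letI := Classical.dec (r = r')
  if r = r' then 0
  else (2 : ℝ) ^
    (-((sSup {i : ℕ | ∀ a ∈ F i, ∀ b ∈ F i, (r.1 a b ↔ r'.1 a b)} : ℕ) : ℤ))

/-!
Two orderings are close when they agree on a large level `F N`; since the levels increase, the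
levels of agreement form an initial segment of `ℕ`, which makes `d_𝐒` an ultrametric. Because each
`F N` is finite, agreeing with `r` on `F N` is a finite intersection of subbasic sets
`U_{(a,b)}` or of their complements `U_{(b,a)}`, so these sets form a neighbourhood basis of `r`
for `𝒰(S)` as well as for `d_𝐒`. Every `U_{(a,b)}` is clopen, which separates distinct orderings.
-/

section

open Filter Topology

variable {S : Type*}

namespace TO

lemma apply_self (r : TO S) (a : S) : r.1 a a := (r.2.2.2 a a).elim id id

lemma not_apply_iff (r : TO S) {a b : S} (hab : a ≠ b) : ¬r.1 a b ↔ r.1 b a :=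
  ⟨(r.2.2.2 a b).resolve_left, fun hba hab' => hab (r.2.1 a b hab' hba)⟩

lemma exists_not_iff_of_ne {r r' : TO S} (h : r ≠ r') : ∃ a b, ¬(r.1 a b ↔ r'.1 a b) := by
  by_contra! hall
  exact h (Subtype.ext (funext₂ fun a b => propext (hall a b)))

lemma isOpen_setOf_apply (a b : S) : IsOpen {r : TO S | r.1 a b} :=
  TopologicalSpace.isOpen_generateFrom_of_mem ⟨a, b, rfl⟩

lemma isClopen_setOf_apply (a b : S) : IsClopen {r : TO S | r.1 a b} := by
  refine ⟨isOpen_compl_iff.mp ?_, isOpen_setOf_apply a b⟩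
  by_cases hab : a = b
  · subst hab
    simp [apply_self]
  · have hcompl : {r : TO S | r.1 a b}ᶜ = {r | r.1 b a} := Set.ext fun r => r.not_apply_iff hab
    rw [hcompl]
    exact isOpen_setOf_apply b a

lemma isClopen_setOf_iff_apply (p : Prop) (a b : S) : IsClopen {r : TO S | p ↔ r.1 a b} := by
  by_cases hp : p
  · simpa [hp] using isClopen_setOf_apply a b
  · simp only [hp, false_iff]
    exact (isClopen_setOf_apply a b).compl

instance : T2Space (TO S) where
  t2 r r' h := by
    obtain ⟨a, b, hab⟩ := exists_not_iff_of_ne h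
    have hC := isClopen_setOf_iff_apply (r.1 a b) a b
    exact ⟨_, _, hC.isOpen, hC.compl.isOpen, Iff.rfl, hab, disjoint_compl_right⟩

end TO

def agreeLevels (F : ℕ → Set S) (r r' : TO S) : Set ℕ :=
  {i | ∀ a ∈ F i, ∀ b ∈ F i, (r.1 a b ↔ r'.1 a b)}

variable {F : ℕ → Set S} {r r' : TO S}

lemma agreeLevels_self (r : TO S) : agreeLevels F r r = Set.univ :=
  Set.eq_univ_of_forall fun _ _ _ _ _ => Iff.rfl

lemma agreeLevels_comm (r r' : TO S) : agreeLevels F r r' = agreeLevels F r' r :=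
  Set.ext fun _ => forall₄_congr fun _ _ _ _ => Iff.comm

lemma inter_agreeLevels_subset (r r' r'' : TO S) :
    agreeLevels F r r' ∩ agreeLevels F r' r'' ⊆ agreeLevels F r r'' :=
  fun _ h a ha b hb => (h.1 a ha b hb).trans (h.2 a ha b hb)

lemma isLowerSet_agreeLevels (hF : Monotone F) (r r' : TO S) :
    IsLowerSet (agreeLevels F r r') :=
  fun _ _ hij hj a ha b hb => hj a (hF hij ha) b (hF hij hb)

lemma exists_mem_and_mem (hF : Monotone F) (hunion : (⋃ i, F i) = Set.univ) (a b : S) :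
    ∃ N, a ∈ F N ∧ b ∈ F N := by
  obtain ⟨i, hi⟩ := Set.iUnion_eq_univ_iff.mp hunion a
  obtain ⟨j, hj⟩ := Set.iUnion_eq_univ_iff.mp hunion b
  exact ⟨max i j, hF (le_max_left i j) hi, hF (le_max_right i j) hj⟩

lemma bddAbove_agreeLevels (hF : Monotone F) (hunion : (⋃ i, F i) = Set.univ) (h : r ≠ r') :
    BddAbove (agreeLevels F r r') := by
  obtain ⟨a, b, hab⟩ := TO.exists_not_iff_of_ne h
  obtain ⟨N, haN, hbN⟩ := exists_mem_and_mem hF hunion a b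
  refine ⟨N, fun i hi => ?_⟩
  by_contra! hNi
  exact hab (isLowerSet_agreeLevels hF r r' hNi.le hi a haN b hbN)

lemma isOpen_setOf_mem_agreeLevels {N : ℕ} (hfin : (F N).Finite) (r : TO S) :
    IsOpen {r' | N ∈ agreeLevels F r r'} := by
  have hinter : {r' | N ∈ agreeLevels F r r'} =
      ⋂ a ∈ F N, ⋂ b ∈ F N, {r' : TO S | r.1 a b ↔ r'.1 a b} := by
    ext
    simp [agreeLevels]
  rw [hinter]
  exact hfin.isOpen_biInter fun a _ => hfin.isOpen_biInter fun b _ =>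
    (TO.isClopen_setOf_iff_apply _ a b).isOpen

lemma dS_self (r : TO S) : dS F r r = 0 := by
  simp [dS]

lemma dS_of_ne (h : r ≠ r') : dS F r r' = 2 ^ (-((sSup (agreeLevels F r r') : ℕ) : ℤ)) := by
  simp [dS, agreeLevels, h]

lemma dS_nonneg (r r' : TO S) : 0 ≤ dS F r r' := by
  by_cases h : r = r'
  · rw [h, dS_self]
  · rw [dS_of_ne h]
    positivity

lemma dS_eq_zero_iff : dS F r r' = 0 ↔ r = r' := by
  refine ⟨fun h => ?_, fun h => h ▸ dS_self r⟩
  by_contra hne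
  rw [dS_of_ne hne] at h
  exact (zpow_pos two_pos _).ne' h

lemma dS_comm (r r' : TO S) : dS F r r' = dS F r' r := by
  by_cases h : r = r'
  · rw [h]
  · rw [dS_of_ne h, dS_of_ne (Ne.symm h), agreeLevels_comm]

lemma dS_le_dS_of_agreeLevels_subset (hF : Monotone F) (hunion : (⋃ i, F i) = Set.univ)
    {s s' : TO S} (h : agreeLevels F r r' ⊆ agreeLevels F s s') : dS F s s' ≤ dS F r r' := by
  by_cases hs : s = s'
  · rw [hs, dS_self]
    exact dS_nonneg r r'
  have hbdd := bddAbove_agreeLevels hF hunion hs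
  have hr : r ≠ r' := by
    rintro rfl
    rw [agreeLevels_self, Set.univ_subset_iff] at h
    exact not_bddAbove_univ (h ▸ hbdd)
  rw [dS_of_ne hs, dS_of_ne hr]
  exact zpow_le_zpow_right₀ one_le_two (neg_le_neg (by exact_mod_cast csSup_le_csSup' hbdd h))

lemma dS_le_max (hF : Monotone F) (hunion : (⋃ i, F i) = Set.univ) (r r' r'' : TO S) :
    dS F r r'' ≤ max (dS F r r') (dS F r' r'') := by
  have hsub := inter_agreeLevels_subset (F := F) r r' r''
  rcases (isLowerSet_agreeLevels hF r r').total (isLowerSet_agreeLevels hF r' r'') with h | h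
  · rw [Set.inter_eq_left.mpr h] at hsub
    exact (dS_le_dS_of_agreeLevels_subset hF hunion hsub).trans (le_max_left _ _)
  · rw [Set.inter_eq_right.mpr h] at hsub
    exact (dS_le_dS_of_agreeLevels_subset hF hunion hsub).trans (le_max_right _ _)

lemma dS_triangle (hF : Monotone F) (hunion : (⋃ i, F i) = Set.univ) (r r' r'' : TO S) :
    dS F r r'' ≤ dS F r r' + dS F r' r'' :=
  (dS_le_max hF hunion r r' r'').trans (max_le_add_of_nonneg (dS_nonneg r r') (dS_nonneg r' r''))

lemma mem_agreeLevels_of_dS_lt (hF : Monotone F) {N : ℕ} (h : dS F r r' < 2 ^ (-(N : ℤ))) :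
    N ∈ agreeLevels F r r' := by
  by_cases hr : r = r'
  · rw [hr, agreeLevels_self]
    trivial
  rw [dS_of_ne hr, zpow_lt_zpow_iff_right₀ one_lt_two, neg_lt_neg_iff, Nat.cast_lt] at h
  obtain ⟨i, hi, hNi⟩ := exists_lt_of_lt_csSup' h
  exact isLowerSet_agreeLevels hF r r' hNi.le hi

lemma dS_le_of_mem_agreeLevels (hF : Monotone F) (hunion : (⋃ i, F i) = Set.univ) {N : ℕ}
    (h : N ∈ agreeLevels F r r') : dS F r r' ≤ 2 ^ (-(N : ℤ)) := by
  by_cases hr : r = r'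
  · rw [hr, dS_self]
    positivity
  rw [dS_of_ne hr]
  exact zpow_le_zpow_right₀ one_le_two
    (neg_le_neg (by exact_mod_cast le_csSup (bddAbove_agreeLevels hF hunion hr) h))

lemma nhds_eq_iInf_agreeLevels (hF : Monotone F) (hunion : (⋃ i, F i) = Set.univ)
    (hfin : ∀ i, (F i).Finite) (r : TO S) :
    𝓝 r = ⨅ N, 𝓟 {r' | N ∈ agreeLevels F r r'} := by
  refine le_antisymm (le_iInf fun N => le_principal_iff.mpr ?_) ?_
  · exact (isOpen_setOf_mem_agreeLevels (hfin N) r).mem_nhds (by simp [agreeLevels_self])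
  · rw [TopologicalSpace.nhds_generateFrom]
    refine le_iInf₂ fun s ⟨hrs, a, b, hs⟩ => ?_
    obtain ⟨N, haN, hbN⟩ := exists_mem_and_mem hF hunion a b
    refine iInf_le_of_le N (principal_mono.mpr fun r' hr' => ?_)
    rw [hs] at hrs ⊢
    exact (hr' a haN b hbN).mp hrs

lemma hasBasis_nhds_agreeLevels (hF : Monotone F) (hunion : (⋃ i, F i) = Set.univ)
    (hfin : ∀ i, (F i).Finite) (r : TO S) :
    (𝓝 r).HasBasis (fun _ => True) fun N => {r' | N ∈ agreeLevels F r r'} := by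
  rw [nhds_eq_iInf_agreeLevels hF hunion hfin r]
  exact hasBasis_iInf_principal (Antitone.directed_ge fun _ _ hNM r' hr' =>
    isLowerSet_agreeLevels hF r r' hNM hr')

lemma exists_zpow_neg_lt {ε : ℝ} (hε : 0 < ε) : ∃ N : ℕ, (2 : ℝ) ^ (-(N : ℤ)) < ε := by
  obtain ⟨N, hN⟩ := exists_pow_lt_of_lt_one hε (by norm_num : (2 : ℝ)⁻¹ < 1)
  exact ⟨N, by rwa [zpow_neg, zpow_natCast, ← inv_pow]⟩

lemma hasBasis_nhds_dS (hF : Monotone F) (hunion : (⋃ i, F i) = Set.univ)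
    (hfin : ∀ i, (F i).Finite) (r : TO S) :
    (𝓝 r).HasBasis (fun ε : ℝ => 0 < ε) fun ε => {r' | dS F r r' < ε} := by
  refine (hasBasis_nhds_agreeLevels hF hunion hfin r).to_hasBasis
    (fun N _ => ⟨2 ^ (-(N : ℤ)), by positivity, fun _ => mem_agreeLevels_of_dS_lt hF⟩)
    (fun ε hε => ?_)
  obtain ⟨N, hN⟩ := exists_zpow_neg_lt hε
  exact ⟨N, trivial, fun _ hr' => (dS_le_of_mem_agreeLevels hF hunion hr').trans_lt hN⟩

lemma isOpen_iff_dS (hF : Monotone F) (hunion : (⋃ i, F i) = Set.univ)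
    (hfin : ∀ i, (F i).Finite) (U : Set (TO S)) :
    IsOpen U ↔ ∀ r ∈ U, ∃ ε > 0, {r' : TO S | dS F r r' < ε} ⊆ U := by
  simp only [isOpen_iff_mem_nhds, (hasBasis_nhds_dS hF hunion hfin _).mem_iff, gt_iff_lt]

end

theorem dS_metric_and_topology_general {S : Type*} (F : ℕ → Set S)
    (hmono : ∀ i, F i ⊆ F (i + 1)) (hunion : (⋃ i, F i) = Set.univ)
    (hfin : ∀ i, (F i).Finite) :
    (∀ r r' : TO S, dS F r r' = 0 ↔ r = r') ∧
    (∀ r r' : TO S, dS F r r' = dS F r' r) ∧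
    (∀ r r' r'' : TO S, dS F r r'' ≤ dS F r r' + dS F r' r'') ∧
    (∀ U : Set (TO S), IsOpen U ↔ ∀ r ∈ U, ∃ ε > 0, {r' : TO S | dS F r r' < ε} ⊆ U) ∧
    T2Space (TO S) := by
  have hF : Monotone F := monotone_nat_of_le_succ hmono
  exact ⟨fun _ _ => dS_eq_zero_iff, dS_comm, dS_triangle hF hunion,
    isOpen_iff_dS hF hunion hfin, inferInstance⟩

/-- If `S` admits a filtration `𝐒 = (F i)` by finite sets, then `d_𝐒` is a metric on `TO(S)`,
the topology it induces coincides with `𝒰(S)` (so in particular the metric topology does not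
depend on the choice of such a filtration), and `𝒰(S)` is Hausdorff. -/
theorem dS_metric_and_topology {S : Type*} (F : ℕ → Set S)
    (h0 : F 0 = ∅) (hmono : ∀ i, F i ⊆ F (i + 1)) (hunion : (⋃ i, F i) = Set.univ)
    (hfin : ∀ i, (F i).Finite) :
    (∀ r r' : TO S, dS F r r' = 0 ↔ r = r') ∧
    (∀ r r' : TO S, dS F r r' = dS F r' r) ∧
    (∀ r r' r'' : TO S, dS F r r'' ≤ dS F r r' + dS F r' r'') ∧
    (∀ U : Set (TO S), IsOpen U ↔ ∀ r ∈ U, ∃ ε > 0, {r' : TO S | dS F r r' < ε} ⊆ U) ∧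
    T2Space (TO S) :=
  dS_metric_and_topology_general F hmono hunion hfin
end

section
/- Let ≺ and ≺' be total well-orderings on N, assume A is multiplicative on {≺, ≺'}, and let L be a left ideal of A with LM_≺(L) ⊆ LM_{≺'}(L). Then LM_≺(L) = LM_{≺'}(L). -/
/-- Monomials of `K[X_1,…,X_t]`, identified with their exponent vectors `ν ∈ ℕ^t`. -/
abbrev Mon (t : ℕ) := Fin t →₀ ℕ

/-- `LM` is a leading-monomial function: for each total ordering `r` on monomials and each
nonzero polynomial `p`, `LM r p` is the `r`-maximal element of the support of `p`. -/
def IsLM (K : Type*) [Field K] (t : ℕ)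
    (LM : TO (Mon t) → MvPolynomial (Fin t) K → Mon t) : Prop :=
  ∀ (r : TO (Mon t)) (p : MvPolynomial (Fin t) K), p ≠ 0 →
    LM r p ∈ p.support ∧ ∀ m ∈ p.support, r.1 m (LM r p)

/-- The leading monomial ideal `LM_≤(E)` of a subset `E ⊆ K[X]`: the ideal generated by the
leading monomials of the nonzero elements of `E`. -/
noncomputable def LMideal (K : Type*) [Field K] (t : ℕ)
    (LM : TO (Mon t) → MvPolynomial (Fin t) K → Mon t)
    (r : TO (Mon t)) (E : Set (MvPolynomial (Fin t) K)) : Ideal (MvPolynomial (Fin t) K) :=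
  Ideal.span {q | ∃ e ∈ E, e ≠ 0 ∧ q = MvPolynomial.monomial (LM r e) (1 : K)}

/- `A` is an associative (not necessarily commutative) `K`-algebra and
`Φ : A ≃ₗ[K] K[X_1,…,X_t]` a `K`-module isomorphism, so `N = Φ⁻¹(M)` is a `K`-basis of `A`.
A total ordering `≺` on `N` is identified, via the bijection induced by `Φ`, with a total
ordering on the monomials of `K[X]`, i.e. on exponent vectors `Mon t`. -/

/-- The leading monomial ideal `LM_≺(H)` of a subset `H ⊆ A`: the ideal of `K[X]` generated by
the leading monomials (the `≺`-maximal monomials of the support of `Φ(h)`) of the nonzero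
elements `h ∈ H`. -/
noncomputable def LMAideal (K A : Type*) [Field K] [Ring A] [Algebra K A] (t : ℕ)
    (Φ : A ≃ₗ[K] MvPolynomial (Fin t) K)
    (LM : TO (Mon t) → MvPolynomial (Fin t) K → Mon t)
    (r : TO (Mon t)) (H : Set A) : Ideal (MvPolynomial (Fin t) K) :=
  Ideal.span {q | ∃ h ∈ H, h ≠ 0 ∧ q = MvPolynomial.monomial (LM r (Φ h)) (1 : K)}

/-- `A` is multiplicative on a set `𝔗` of total orderings: `A` is a domain and
`LM_≺(a·b) = LM_≺(a)·LM_≺(b)` (i.e. addition of exponent vectors) for all nonzero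
`a, b ∈ A` and all `≺ ∈ 𝔗`. -/
def MultOn (K A : Type*) [Field K] [Ring A] [Algebra K A] (t : ℕ)
    (Φ : A ≃ₗ[K] MvPolynomial (Fin t) K)
    (LM : TO (Mon t) → MvPolynomial (Fin t) K → Mon t)
    (T : Set (TO (Mon t))) : Prop :=
  (∀ a b : A, a ≠ 0 → b ≠ 0 → a * b ≠ 0) ∧
  (∀ r ∈ T, ∀ a b : A, a ≠ 0 → b ≠ 0 → LM r (Φ (a * b)) = LM r (Φ a) + LM r (Φ b))

/-- A total ordering is a (total) well-ordering: every nonempty subset has a minimum. -/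
def IsWO {S : Type*} (r : TO S) : Prop :=
  ∀ T : Set S, T.Nonempty → ∃ a ∈ T, ∀ b ∈ T, r.1 a b

/-!
Let `S_≺` be the set of `≺`-leading monomials of the nonzero elements of `Φ(L)`, so that
`LM_≺(L)` is generated by the monomials with exponents in `S_≺`. Multiplicativity makes `S_≺'`
closed upwards, hence `LM_≺(L) ⊆ LM_≺'(L)` gives `S_≺ ⊆ S_≺'`. Conversely, for `ν ∈ S_≺'` divide
`X^ν` by `Φ(L)` with respect to the well-ordering `≺'`: the remainder `q` has no monomial in
`S_≺'`. The `≺`-leading monomial of `X^ν - q ∈ Φ(L)` lies in `S_≺ ⊆ S_≺'`, so it is not a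
monomial of `q` and must be `ν`; thus `S_≺' = S_≺`.
-/

open MvPolynomial

section LeadingMonomials

variable {K : Type*} [Field K] {t : ℕ}

def leadingMonomials (LM : TO (Mon t) → MvPolynomial (Fin t) K → Mon t) (r : TO (Mon t))
    (E : Set (MvPolynomial (Fin t) K)) : Set (Mon t) :=
  {ν | ∃ p ∈ E, p ≠ 0 ∧ LM r p = ν}

def TO.lt {S : Type*} (r : TO S) (x y : S) : Prop := r.1 x y ∧ x ≠ y

theorem IsWO.wellFounded {S : Type*} {r : TO S} (hr : IsWO r) : WellFounded r.lt :=
  WellFounded.wellFounded_iff_has_min.mpr fun T hT =>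
    let ⟨a, ha, hmin⟩ := hr T hT
    ⟨a, ha, fun x hx hxa => hxa.2 (r.2.1 x a hxa.1 (hmin x hx))⟩

theorem monomial_mem_span_monomial_image_iff {S : Set (Mon t)} (hS : IsUpperSet S) (ν : Mon t) :
    monomial ν (1 : K) ∈ Ideal.span ((fun s => monomial s (1 : K)) '' S) ↔ ν ∈ S := by
  classical
  rw [mem_ideal_span_monomial_image, support_monomial, if_neg one_ne_zero]
  simp only [Finset.mem_singleton, forall_eq]
  exact ⟨fun ⟨s, hs, hsν⟩ => hS hsν hs, fun hν => ⟨ν, hν, le_rfl⟩⟩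

variable {LM : TO (Mon t) → MvPolynomial (Fin t) K → Mon t}

theorem LMideal_eq_span_leadingMonomials (r : TO (Mon t)) (E : Set (MvPolynomial (Fin t) K)) :
    LMideal K t LM r E = Ideal.span ((fun s => monomial s (1 : K)) '' leadingMonomials LM r E) := by
  unfold LMideal leadingMonomials
  congr 1
  ext q
  simp only [Set.mem_ofPred_eq, Set.mem_image]
  constructor
  · rintro ⟨p, hp, hp0, rfl⟩
    exact ⟨_, ⟨p, hp, hp0, rfl⟩, rfl⟩
  · rintro ⟨_, ⟨p, hp, hp0, rfl⟩, rfl⟩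
    exact ⟨p, hp, hp0, rfl⟩

theorem LMAideal_eq_LMideal_image {A : Type*} [Ring A] [Algebra K A]
    (Φ : A ≃ₗ[K] MvPolynomial (Fin t) K) (r : TO (Mon t)) (H : Set A) :
    LMAideal K A t Φ LM r H = LMideal K t LM r (Φ '' H) := by
  unfold LMAideal LMideal
  congr 1
  ext q
  simp only [Set.mem_ofPred_eq, Set.exists_mem_image, ne_eq, LinearEquiv.map_eq_zero_iff]

theorem leadingMonomials_subset_of_LMideal_le {r r' : TO (Mon t)}
    {E : Set (MvPolynomial (Fin t) K)} (hup : IsUpperSet (leadingMonomials LM r' E))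
    (hle : LMideal K t LM r E ≤ LMideal K t LM r' E) :
    leadingMonomials LM r E ⊆ leadingMonomials LM r' E := by
  rw [LMideal_eq_span_leadingMonomials, LMideal_eq_span_leadingMonomials] at hle
  exact fun ν hν =>
    (monomial_mem_span_monomial_image_iff hup ν).mp (hle (Ideal.subset_span ⟨ν, hν, rfl⟩))

variable (hLM : IsLM K t LM)
include hLM

theorem IsLM.LM_monomial (r : TO (Mon t)) (ν : Mon t) {c : K} (hc : c ≠ 0) :
    LM r (monomial ν c) = ν := by
  simpa using support_monomial_subset (hLM r _ (monomial_eq_zero.not.mpr hc)).1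


theorem IsLM.support_sub_smul_lt {r : TO (Mon t)} {p g : MvPolynomial (Fin t) K} (hp : p ≠ 0)
    (hg : g ≠ 0) (hgp : LM r g = LM r p) :
    ∀ m ∈ (p - (p.coeff (LM r p) / g.coeff (LM r p)) • g).support, r.lt m (LM r p) := by
  intro m hm
  have hgν : g.coeff (LM r p) ≠ 0 := mem_support_iff.mp (hgp ▸ (hLM r g hg).1)
  constructor
  · rcases Finset.mem_union.mp (support_sub _ _ _ hm) with h | h
    · exact (hLM r p hp).2 m h
    · exact hgp ▸ (hLM r g hg).2 m (support_smul h)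
  · rintro rfl
    exact mem_support_iff.mp hm (by simp [div_mul_cancel₀ _ hgν])

theorem IsLM.exists_sub_mem_forall_notMem_leadingMonomials {r : TO (Mon t)} (hr : IsWO r)
    (W : Submodule K (MvPolynomial (Fin t) K)) (p : MvPolynomial (Fin t) K) :
    ∃ q, p - q ∈ W ∧ ∀ m ∈ q.support, m ∉ leadingMonomials LM r W := by
  induction hν : LM r p using hr.wellFounded.induction generalizing p with
  | _ ν ih =>
  by_cases hp : p = 0
  · exact ⟨0, by simp [hp], by simp⟩
  have reduce : ∀ p₂ : MvPolynomial (Fin t) K, (∀ m ∈ p₂.support, r.lt m ν) →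
      ∃ q, p₂ - q ∈ W ∧ ∀ m ∈ q.support, m ∉ leadingMonomials LM r W := by
    intro p₂ hlt
    by_cases hp₂ : p₂ = 0
    · exact ⟨0, by simp [hp₂], by simp⟩
    exact ih _ (hlt _ (hLM r p₂ hp₂).1) p₂ rfl
  subst hν
  -- Cancel the leading term of `p` against an element of `W` if there is one with the same
  -- leading monomial; otherwise move it into the remainder.
  by_cases hS : LM r p ∈ leadingMonomials LM r W
  · obtain ⟨g, hgW, hg, hgp⟩ := hS
    obtain ⟨q, hq, hqS⟩ := reduce _ (hLM.support_sub_smul_lt hp hg hgp)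
    refine ⟨q, ?_, hqS⟩
    convert W.add_mem hq (W.smul_mem (p.coeff (LM r p) / g.coeff (LM r p)) hgW) using 1
    abel
  · set g := monomial (LM r p) (1 : K)
    have hg : g ≠ 0 := monomial_eq_zero.not.mpr one_ne_zero
    obtain ⟨q, hq, hqS⟩ :=
      reduce _ (hLM.support_sub_smul_lt hp hg (hLM.LM_monomial r _ one_ne_zero))
    refine ⟨q + (p.coeff (LM r p) / g.coeff (LM r p)) • g, by convert hq using 1; abel, ?_⟩
    intro m hm
    rcases Finset.mem_union.mp (support_add hm) with h | h
    · exact hqS m h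
    · rwa [Finset.mem_singleton.mp (support_monomial_subset (support_smul h))]

theorem IsLM.leadingMonomials_subset_of_subset {r r' : TO (Mon t)} (hr' : IsWO r')
    (W : Submodule K (MvPolynomial (Fin t) K))
    (hsub : leadingMonomials LM r W ⊆ leadingMonomials LM r' W) :
    leadingMonomials LM r' W ⊆ leadingMonomials LM r W := by
  intro ν hν
  obtain ⟨q, hqW, hqS⟩ :=
    hLM.exists_sub_mem_forall_notMem_leadingMonomials hr' W (monomial ν (1 : K))
  have hf : monomial ν (1 : K) - q ≠ 0 := by
    intro h
    rw [sub_eq_zero] at h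
    exact hqS ν (h ▸ by simp) hν
  have hlead : LM r (monomial ν 1 - q) ∈ leadingMonomials LM r W := ⟨_, hqW, hf, rfl⟩
  rcases Finset.mem_union.mp (support_sub _ _ _ (hLM r _ hf).1) with h | h
  · rwa [Finset.mem_singleton.mp (support_monomial_subset h)] at hlead
  · exact absurd (hsub hlead) (hqS _ h)

theorem IsLM.isUpperSet_leadingMonomials {A : Type*} [Ring A] [Algebra K A]
    {Φ : A ≃ₗ[K] MvPolynomial (Fin t) K} {T : Set (TO (Mon t))} (hmult : MultOn K A t Φ LM T)
    {r : TO (Mon t)} (hr : r ∈ T) (L : Submodule A A) :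
    IsUpperSet (leadingMonomials LM r (Φ '' L)) := by
  rintro ν μ hνμ ⟨_, ⟨h, hL, rfl⟩, hh, rfl⟩
  obtain ⟨c, rfl⟩ := le_iff_exists_add.mp hνμ
  set n := Φ.symm (monomial c (1 : K))
  have hn : n ≠ 0 := by simp [n]
  have hh' : h ≠ 0 := by rintro rfl; simp at hh
  refine ⟨Φ (n * h), ⟨n * h, L.smul_mem n hL, rfl⟩, by simpa using hmult.1 n h hn hh', ?_⟩
  rw [hmult.2 r hr n h hn hh', LinearEquiv.apply_symm_apply, hLM.LM_monomial r c one_ne_zero,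
    add_comm]

end LeadingMonomials

theorem LMAideal_eq_of_le_general (K A : Type*) [Field K] [Ring A] [Algebra K A] (t : ℕ)
    (Φ : A ≃ₗ[K] MvPolynomial (Fin t) K)
    (LM : TO (Mon t) → MvPolynomial (Fin t) K → Mon t) (hLM : IsLM K t LM)
    (r r' : TO (Mon t)) (hWO' : IsWO r')
    (hmult : MultOn K A t Φ LM {r, r'})
    (L : Submodule A A)
    (hle : LMAideal K A t Φ LM r (L : Set A) ≤ LMAideal K A t Φ LM r' (L : Set A)) :
    LMAideal K A t Φ LM r (L : Set A) = LMAideal K A t Φ LM r' (L : Set A) := by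
  let W := (L.restrictScalars K).map (Φ : A →ₗ[K] MvPolynomial (Fin t) K)
  have hW : (W : Set (MvPolynomial (Fin t) K)) = Φ '' L := Submodule.map_coe _ _
  rw [LMAideal_eq_LMideal_image, LMAideal_eq_LMideal_image] at hle ⊢
  have hsub := leadingMonomials_subset_of_LMideal_le
    (hLM.isUpperSet_leadingMonomials hmult (Set.mem_insert_of_mem r rfl) L) hle
  rw [← hW] at hsub
  rw [LMideal_eq_span_leadingMonomials, LMideal_eq_span_leadingMonomials, ← hW,
    (hLM.leadingMonomials_subset_of_subset hWO' W hsub).antisymm hsub]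

/-- If `≺, ≺'` are total well-orderings on `N`, `A` is multiplicative on `{≺, ≺'}`, and `L` is
a left ideal of `A` with `LM_≺(L) ⊆ LM_{≺'}(L)`, then `LM_≺(L) = LM_{≺'}(L)`. -/
theorem LMAideal_eq_of_le (K A : Type*) [Field K] [Ring A] [Algebra K A] (t : ℕ) (ht : 1 ≤ t)
    (Φ : A ≃ₗ[K] MvPolynomial (Fin t) K)
    (LM : TO (Mon t) → MvPolynomial (Fin t) K → Mon t) (hLM : IsLM K t LM)
    (r r' : TO (Mon t)) (hWO : IsWO r) (hWO' : IsWO r')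
    (hmult : MultOn K A t Φ LM {r, r'})
    (L : Submodule A A)
    (hle : LMAideal K A t Φ LM r (L : Set A) ≤ LMAideal K A t Φ LM r' (L : Set A)) :
    LMAideal K A t Φ LM r (L : Set A) = LMAideal K A t Φ LM r' (L : Set A) :=
  LMAideal_eq_of_le_general K A t Φ LM hLM r r' hWO' hmult L hle
end

section
/- Let ≺ be a total well-ordering on N such that A is multiplicative on {≺}. Let L be a left ideal of A and let F be a finite subset of L such that LM_≺(L) = LM_≺(F). Then L = Σ_{f∈F} A·f, i.e. F generates L as a left ideal. -/
/-!
Take a counterexample `x ∈ L \ span F` whose leading monomial `m` is `≺`-minimal. Since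
`LM_≺(L) = LM_≺(F)`, some `f ∈ F` has `LM_≺(f) ∣ m`; pulling the quotient monomial back through
`Φ` gives `u` with `LM_≺(u f) = m` by multiplicativity. Subtracting the right scalar multiple of
`u f` from `x` kills the leading term, producing a counterexample with a smaller leading monomial.
-/

open MvPolynomial

theorem IsWO.exists_min_image {S α : Type*} {r : TO S} (hr : IsWO r) (f : α → S) {P : Set α}
    (hP : P.Nonempty) : ∃ x ∈ P, ∀ y ∈ P, r.1 (f x) (f y) := by
  obtain ⟨_, ⟨x, hx, rfl⟩, hmin⟩ := hr (f '' P) (hP.image f)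
  exact ⟨x, hx, fun y hy => hmin _ ⟨y, hy, rfl⟩⟩

namespace IsLM

variable {K : Type*} [Field K] {t : ℕ} {LM : TO (Mon t) → MvPolynomial (Fin t) K → Mon t}

theorem LM_monomial_s17 (hLM : IsLM K t LM) (r : TO (Mon t)) (m : Mon t) {c : K} (hc : c ≠ 0) :
    LM r (monomial m c) = m := by
  have h := (hLM r (monomial m c) (by simpa using hc)).1
  exact Finset.mem_singleton.mp (support_monomial_subset h)

theorem exists_LM_sub_smul_lt (hLM : IsLM K t LM) (r : TO (Mon t))
    {p q : MvPolynomial (Fin t) K} (hq : q ≠ 0) (hqp : LM r q = LM r p) :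
    ∃ c : K, p - c • q ≠ 0 → r.1 (LM r (p - c • q)) (LM r p) ∧ LM r (p - c • q) ≠ LM r p := by
  set m := LM r p
  have hqm : q.coeff m ≠ 0 := hqp ▸ mem_support_iff.mp (hLM r q hq).1
  set c := p.coeff m / q.coeff m
  refine ⟨c, fun hg => ⟨?_, fun hgm => ?_⟩⟩
  · have hsupp := support_sub (Fin t) p (c • q) (hLM r _ hg).1
    rcases Finset.mem_union.mp hsupp with hp | hcq
    · exact (hLM r p (ne_zero_iff.mpr ⟨_, mem_support_iff.mp hp⟩)).2 _ hp
    · exact hqp ▸ (hLM r q hq).2 _ (support_smul hcq)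
  · have hcoeff := mem_support_iff.mp (hLM r _ hg).1
    rw [hgm, coeff_sub, coeff_smul, smul_eq_mul, div_mul_cancel₀ _ hqm, sub_self] at hcoeff
    exact hcoeff rfl

end IsLM

section LeadingMonomials

variable {K A : Type*} [Field K] [Ring A] [Algebra K A] {t : ℕ}
  (Φ : A ≃ₗ[K] MvPolynomial (Fin t) K) (LM : TO (Mon t) → MvPolynomial (Fin t) K → Mon t)
  (r : TO (Mon t))

theorem exists_LM_le_of_monomial_mem_LMAideal {H : Set A} {m : Mon t}
    (hm : monomial m (1 : K) ∈ LMAideal K A t Φ LM r H) :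
    ∃ h ∈ H, h ≠ 0 ∧ LM r (Φ h) ≤ m := by
  have hspan : LMAideal K A t Φ LM r H =
      Ideal.span ((fun s => monomial s (1 : K)) '' {s | ∃ h ∈ H, h ≠ 0 ∧ s = LM r (Φ h)}) := by
    unfold LMAideal
    congr 1
    ext q
    constructor
    · rintro ⟨h, hH, h0, rfl⟩
      exact ⟨_, ⟨h, hH, h0, rfl⟩, rfl⟩
    · rintro ⟨_, ⟨h, hH, h0, rfl⟩, rfl⟩
      exact ⟨h, hH, h0, rfl⟩
  rw [hspan, mem_ideal_span_monomial_image] at hm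
  obtain ⟨_, ⟨h, hH, h0, rfl⟩, hle⟩ :=
    hm m (mem_support_iff.mpr (by rw [coeff_monomial, if_pos rfl]; exact one_ne_zero))
  exact ⟨h, hH, h0, hle⟩

variable {Φ LM r}

theorem MultOn.exists_LM_mul_eq {T : Set (TO (Mon t))} (hmult : MultOn K A t Φ LM T)
    (hLM : IsLM K t LM) (hr : r ∈ T) {f : A} (hf : f ≠ 0) {m : Mon t} (hle : LM r (Φ f) ≤ m) :
    ∃ u : A, u * f ≠ 0 ∧ LM r (Φ (u * f)) = m := by
  obtain ⟨δ, rfl⟩ := le_iff_exists_add.mp hle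
  set u := Φ.symm (monomial δ (1 : K))
  have hu : u ≠ 0 := Φ.symm.map_ne_zero_iff.mpr (monomial_eq_zero.not.mpr one_ne_zero)
  refine ⟨u, hmult.1 u f hu hf, ?_⟩
  rw [hmult.2 r hr u f hu hf, Φ.apply_symm_apply, hLM.LM_monomial_s17 r δ one_ne_zero, add_comm]

end LeadingMonomials

theorem span_of_LMAideal_eq_general (K A : Type*) [Field K] [Ring A] [Algebra K A] (t : ℕ)
    (Φ : A ≃ₗ[K] MvPolynomial (Fin t) K)
    (LM : TO (Mon t) → MvPolynomial (Fin t) K → Mon t) (hLM : IsLM K t LM)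
    (r : TO (Mon t)) (hWO : IsWO r)
    (hmult : MultOn K A t Φ LM {r})
    (L : Submodule A A) (F : Finset A) (hFL : (F : Set A) ⊆ (L : Set A))
    (hLMeq : LMAideal K A t Φ LM r (L : Set A) = LMAideal K A t Φ LM r (F : Set A)) :
    L = Submodule.span A (F : Set A) := by
  set S := Submodule.span A (F : Set A)
  have hSL : S ≤ L := Submodule.span_le.mpr hFL
  refine le_antisymm (fun x₀ hx₀L => by_contra fun hx₀S => ?_) hSL
  obtain ⟨x, ⟨hxL, hxS⟩, hmin⟩ :=
    hWO.exists_min_image (fun x => LM r (Φ x)) (P := {x | x ∈ L ∧ x ∉ S}) ⟨x₀, hx₀L, hx₀S⟩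
  have hx0 : x ≠ 0 := by rintro rfl; exact hxS S.zero_mem
  have hxLM : monomial (LM r (Φ x)) (1 : K) ∈ LMAideal K A t Φ LM r (L : Set A) :=
    Ideal.subset_span ⟨x, hxL, hx0, rfl⟩
  obtain ⟨f, hfF, hf0, hle⟩ := exists_LM_le_of_monomial_mem_LMAideal Φ LM r (hLMeq ▸ hxLM)
  obtain ⟨u, huf0, huf⟩ := hmult.exists_LM_mul_eq hLM rfl hf0 hle
  obtain ⟨c, hc⟩ := hLM.exists_LM_sub_smul_lt r (Φ.map_ne_zero_iff.mpr huf0) huf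
  rw [← map_smul, ← map_sub] at hc
  have hcuf : c • (u * f) ∈ S := S.smul_of_tower_mem c (S.smul_mem u (Submodule.subset_span hfF))
  have hgS : x - c • (u * f) ∉ S := fun hg => hxS (by simpa using S.add_mem hg hcuf)
  have hg0 : x - c • (u * f) ≠ 0 := by intro hg; exact hgS (hg ▸ S.zero_mem)
  obtain ⟨hgx, hne⟩ := hc (Φ.map_ne_zero_iff.mpr hg0)
  exact hne (r.2.1 _ _ hgx (hmin _ ⟨L.sub_mem hxL (hSL hcuf), hgS⟩))

/-- If `≺` is a total well-ordering on `N`, `A` is multiplicative on `{≺}`, `L` is a left ideal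
of `A`, and `F` is a finite subset of `L` with `LM_≺(L) = LM_≺(F)`, then `F` generates `L` as a
left ideal: `L = Σ_{f ∈ F} A·f`. -/
theorem span_of_LMAideal_eq (K A : Type*) [Field K] [Ring A] [Algebra K A] (t : ℕ) (ht : 1 ≤ t)
    (Φ : A ≃ₗ[K] MvPolynomial (Fin t) K)
    (LM : TO (Mon t) → MvPolynomial (Fin t) K → Mon t) (hLM : IsLM K t LM)
    (r : TO (Mon t)) (hWO : IsWO r)
    (hmult : MultOn K A t Φ LM {r})
    (L : Submodule A A) (F : Finset A) (hFL : (F : Set A) ⊆ (L : Set A))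
    (hLMeq : LMAideal K A t Φ LM r (L : Set A) = LMAideal K A t Φ LM r (F : Set A)) :
    L = Submodule.span A (F : Set A) :=
  span_of_LMAideal_eq_general K A t Φ LM hLM r hWO hmult L F hFL hLMeq
end
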